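/- arXiv:1411.0024 — 5 statements merged into one kernel-verified Lean document; each statement's English description precedes it below -/
import Mathlib

section
/- Let k, m, n be positive integers with k < min(m, n), let P ∈ ℝ^{n×k} and Q ∈ ℝ^{m×k} both have full column rank k, let b ∈ ℝ^m, and let λ ≥ 0. Then the non-robust square-root LASSO problem min_{w ∈ ℝ^n} ‖Q Pᵀ w − b‖₂ + λ‖w‖₁ admits an optimal solution w* whose cardinality (number of nonzero entries) is at most k. -/
/-!
A minimizer `w₀` exists: for `λ > 0` the objective is coercive, and for `λ = 0` it is the
distance from `b` to a finite-dimensional subspace. The residual only depends on `Pᵀ w`, so any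
`w` with `Pᵀ w = Pᵀ w₀` and `‖w‖₁ ≤ ‖w₀‖₁` is optimal too. Take such a `w` that is ℓ1-minimal on
the fibre of `w ↦ Pᵀ w = ∑ᵢ wᵢ Pᵢ` and has the smallest support. If the rows `Pᵢ` on its support were
dependent, a dependence `d` and the largest `|t|` for which no coordinate of `w ± t d` changes sign
would make `‖w + s d‖₁` affine on `[-|t|, |t|]`, hence constant by minimality, while one of
`w ± t d` has smaller support. So the support indexes independent vectors of `ℝᵏ`.
-/

open Matrix

/-- Euclidean norm of a vector in `ℝ^n`. -/
noncomputable def norm2 {n : ℕ} (x : Fin n → ℝ) : ℝ := Real.sqrt (∑ i, x i ^ 2)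

/-- ℓ1 norm of a vector in `ℝ^n`. -/
noncomputable def norm1 {n : ℕ} (x : Fin n → ℝ) : ℝ := ∑ i, |x i|

open Filter Topology Function

theorem norm1_eq_norm_toLp {n : ℕ} (x : Fin n → ℝ) : norm1 x = ‖WithLp.toLp 1 x‖ := by
  simp [norm1, PiLp.norm_eq_of_L1]

theorem norm2_eq_norm_toLp {n : ℕ} (x : Fin n → ℝ) : norm2 x = ‖WithLp.toLp 2 x‖ := by
  simp [norm2, EuclideanSpace.norm_eq]

theorem LinearMap.exists_forall_norm_sub_le {E F : Type*} [AddCommGroup E] [Module ℝ E]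
    [FiniteDimensional ℝ E] [NormedAddCommGroup F] [NormedSpace ℝ F] (T : E →ₗ[ℝ] F) (b : F) :
    ∃ w, ∀ w', ‖T w - b‖ ≤ ‖T w' - b‖ := by
  have hcoer : Tendsto (fun y : range T => ‖(y : F) - b‖) (cocompact _) atTop :=
    tendsto_atTop_mono (fun y => by simpa using norm_sub_norm_le (y : F) b)
      (tendsto_atTop_add_const_right _ (-‖b‖) tendsto_norm_cocompact_atTop)
  obtain ⟨⟨_, w, rfl⟩, hw⟩ :=
    (continuous_subtype_val.sub continuous_const).norm.exists_forall_le hcoer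
  exact ⟨w, fun w' => hw ⟨T w', w', rfl⟩⟩

theorem LinearMap.exists_forall_norm_sub_add_mul_norm_le {E F : Type*} [NormedAddCommGroup E]
    [NormedSpace ℝ E] [FiniteDimensional ℝ E] [NormedAddCommGroup F] [NormedSpace ℝ F]
    (T : E →ₗ[ℝ] F) (b : F) {lam : ℝ} (hlam : 0 ≤ lam) :
    ∃ w, ∀ w', ‖T w - b‖ + lam * ‖w‖ ≤ ‖T w' - b‖ + lam * ‖w'‖ := by
  rcases hlam.eq_or_lt with rfl | hlam
  · simpa using T.exists_forall_norm_sub_le b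
  have hcoer : Tendsto (fun w => ‖T w - b‖ + lam * ‖w‖) (cocompact E) atTop :=
    tendsto_atTop_mono (fun w => le_add_of_nonneg_left (norm_nonneg _))
      (tendsto_norm_cocompact_atTop.const_mul_atTop hlam)
  exact ((T.continuous_of_finiteDimensional.sub continuous_const).norm.add
    (continuous_const.mul continuous_norm)).exists_forall_le hcoer

theorem Matrix.exists_forall_norm2_mulVec_sub_add_mul_norm1_le {m n : ℕ}
    (A : Matrix (Fin m) (Fin n) ℝ) (b : Fin m → ℝ) {lam : ℝ} (hlam : 0 ≤ lam) :
    ∃ w, ∀ w', norm2 (A *ᵥ w - b) + lam * norm1 w ≤ norm2 (A *ᵥ w' - b) + lam * norm1 w' := by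
  let T : WithLp 1 (Fin n → ℝ) →ₗ[ℝ] EuclideanSpace ℝ (Fin m) :=
    (WithLp.linearEquiv 2 ℝ (Fin m → ℝ)).symm.toLinearMap ∘ₗ A.mulVecLin ∘ₗ
      (WithLp.linearEquiv 1 ℝ (Fin n → ℝ)).toLinearMap
  have hT (w : Fin n → ℝ) : T (WithLp.toLp 1 w) - WithLp.toLp 2 b = WithLp.toLp 2 (A *ᵥ w - b) :=
    rfl
  obtain ⟨w, hw⟩ := T.exists_forall_norm_sub_add_mul_norm_le (WithLp.toLp 2 b) hlam
  refine ⟨w.ofLp, fun w' => ?_⟩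
  simpa only [norm2_eq_norm_toLp, norm1_eq_norm_toLp, ← hT] using hw (WithLp.toLp 1 w')

theorem LinearMap.exists_norm1_minimal_in_fiber {n : ℕ} {V : Type*} [AddCommGroup V]
    [Module ℝ V] (L : (Fin n → ℝ) →ₗ[ℝ] V) (w₀ : Fin n → ℝ) :
    ∃ w, L w = L w₀ ∧ ∀ w', L w' = L w₀ → norm1 w ≤ norm1 w' := by
  -- The ℓ1-distance from `-w₀` to `ker L`.
  let T : ker L →ₗ[ℝ] WithLp 1 (Fin n → ℝ) :=
    (WithLp.linearEquiv 1 ℝ (Fin n → ℝ)).symm.toLinearMap ∘ₗ (ker L).subtype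
  obtain ⟨u, hu⟩ := T.exists_forall_norm_sub_le (WithLp.toLp 1 (-w₀))
  refine ⟨u + w₀, by simp [mem_ker.1 u.2], fun w' hw' => ?_⟩
  simpa [T, norm1_eq_norm_toLp] using hu ⟨w' - w₀, sub_mem_ker_iff.2 hw'⟩

theorem abs_add_eq_abs_add_sign_mul {a b : ℝ} (h : |b| ≤ |a|) :
    |a + b| = |a| + Real.sign a * b := by
  rcases lt_trichotomy a 0 with ha | rfl | ha
  · rw [abs_of_neg ha] at h ⊢
    rw [Real.sign_of_neg ha, abs_of_nonpos (by linarith [le_abs_self b])]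
    ring
  · simp_all
  · rw [abs_of_pos ha] at h ⊢
    rw [Real.sign_of_pos ha, abs_of_nonneg (by linarith [neg_abs_le b])]
    ring

theorem norm1_add_smul_of_abs_le {n : ℕ} {w d : Fin n → ℝ} {t : ℝ}
    (h : ∀ i, |t * d i| ≤ |w i|) :
    norm1 (w + t • d) = norm1 w + t * ∑ i, Real.sign (w i) * d i := by
  simp only [norm1, Pi.add_apply, Pi.smul_apply, smul_eq_mul, abs_add_eq_abs_add_sign_mul (h _),
    Finset.sum_add_distrib, Finset.mul_sum]
  congr 1
  exact Finset.sum_congr rfl fun i _ => by ring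

theorem exists_abs_mul_le_abs_and_add_mul_eq_zero {ι : Type*} [Fintype ι] {w d : ι → ℝ}
    (hd : d ≠ 0) (hsupp : support d ⊆ support w) :
    ∃ t : ℝ, (∀ i, |t * d i| ≤ |w i|) ∧ ∃ i, w i ≠ 0 ∧ w i + t * d i = 0 := by
  classical
  have hne : (Finset.univ.filter fun i => d i ≠ 0).Nonempty := by
    obtain ⟨i, hi⟩ := Function.ne_iff.1 hd
    exact ⟨i, by simpa using hi⟩
  obtain ⟨i₀, hi₀, hmin⟩ := Finset.exists_min_image _ (fun i => |w i| / |d i|) hne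
  have hd₀ : d i₀ ≠ 0 := by simpa using hi₀
  refine ⟨-(w i₀ / d i₀), fun i => ?_, i₀, hsupp hd₀, by field_simp; ring⟩
  by_cases hdi : d i = 0
  · simp [hdi]
  rw [abs_mul, abs_neg, abs_div, ← le_div_iff₀ (abs_pos.2 hdi)]
  exact hmin i (by simpa using hdi)

section Sparsity

variable {n : ℕ} {V : Type*} [AddCommGroup V] [Module ℝ V] (v : Fin n → V)

theorem exists_norm1_eq_support_ssubset_of_not_linearIndepOn {w : Fin n → ℝ}
    (hmin : ∀ u, Fintype.linearCombination ℝ v u = Fintype.linearCombination ℝ v w →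
      norm1 w ≤ norm1 u)
    (hdep : ¬LinearIndepOn ℝ v (support w)) :
    ∃ w', Fintype.linearCombination ℝ v w' = Fintype.linearCombination ℝ v w ∧
      norm1 w' = norm1 w ∧ support w' ⊂ support w := by
  obtain ⟨f, hf, hfv, hf0⟩ := linearDepOn_iff'.1 hdep
  set d : Fin n → ℝ := ⇑f
  have hdv : Fintype.linearCombination ℝ v d = 0 := by
    rw [← Finsupp.linearCombination_eq_fintype_linearCombination_apply]
    simpa [d] using hfv
  have hsupp : support d ⊆ support w := fun i hi => hf (by simpa [d] using hi)
  obtain ⟨t, ht, i₀, hwi₀, hi₀⟩ :=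
    exists_abs_mul_le_abs_and_add_mul_eq_zero (by simpa [d] using hf0) hsupp
  have hfiber (s : ℝ) : Fintype.linearCombination ℝ v (w + s • d) =
      Fintype.linearCombination ℝ v w := by
    simp [hdv]
  have hplus := norm1_add_smul_of_abs_le ht
  have hminus := norm1_add_smul_of_abs_le (t := -t) (by simpa using ht)
  have hle_plus := hmin _ (hfiber t)
  have hle_minus := hmin _ (hfiber (-t))
  refine ⟨w + t • d, hfiber t, by linarith, ?_, fun h => h hwi₀ (by simpa using hi₀)⟩
  intro i hi hwi
  exact hi (by simp [hwi, notMem_support.1 fun h => hsupp h hwi])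

theorem exists_norm1_le_linearIndepOn_support (w₀ : Fin n → ℝ) :
    ∃ w, Fintype.linearCombination ℝ v w = Fintype.linearCombination ℝ v w₀ ∧
      norm1 w ≤ norm1 w₀ ∧ LinearIndepOn ℝ v (support w) := by
  set L := Fintype.linearCombination ℝ v
  let M := {w | L w = L w₀ ∧ ∀ u, L u = L w₀ → norm1 w ≤ norm1 u}
  obtain ⟨w, ⟨hw, hwmin⟩, hsmallest⟩ :=
    (measure fun w : Fin n → ℝ => (support w).ncard).wf.has_min M
      (L.exists_norm1_minimal_in_fiber w₀)
  refine ⟨w, hw, hwmin w₀ rfl, ?_⟩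
  by_contra hdep
  obtain ⟨w', hw', hnorm, hss⟩ := exists_norm1_eq_support_ssubset_of_not_linearIndepOn v
    (fun u hu => hwmin u (hu.trans hw)) hdep
  exact hsmallest w' ⟨hw'.trans hw, fun u hu => hnorm ▸ hwmin u hu⟩
    (Set.ncard_lt_ncard hss (Set.toFinite _))

end Sparsity

theorem LinearIndepOn.ncard_le_finrank {ι R V : Type*} [Ring R] [StrongRankCondition R]
    [AddCommGroup V] [Module R V] [Module.Finite R V] {v : ι → V} {s : Set ι}
    (hs : LinearIndepOn R v s) : s.ncard ≤ Module.finrank R V := by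
  have := hs.finite
  have := Fintype.ofFinite s
  rw [Set.ncard_eq_toFinset_card', Set.toFinset_card]
  exact LinearIndependent.fintype_card_le_finrank hs

theorem nonrobust_sqrt_lasso_sparse_solution_general
    {k m n : ℕ}
    (P : Matrix (Fin n) (Fin k) ℝ) (Q : Matrix (Fin m) (Fin k) ℝ)
    (b : Fin m → ℝ) (lam : ℝ) (hlam : 0 ≤ lam) :
    ∃ w : Fin n → ℝ,
      (∀ w' : Fin n → ℝ,
        norm2 ((Q * Pᵀ).mulVec w - b) + lam * norm1 w ≤
          norm2 ((Q * Pᵀ).mulVec w' - b) + lam * norm1 w') ∧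
      {i : Fin n | w i ≠ 0}.ncard ≤ k := by
  obtain ⟨w₀, hw₀⟩ := (Q * Pᵀ).exists_forall_norm2_mulVec_sub_add_mul_norm1_le b hlam
  obtain ⟨w, hPw, hw₁, hindep⟩ := exists_norm1_le_linearIndepOn_support (fun i => P i) w₀
  have hQPw : (Q * Pᵀ) *ᵥ w = (Q * Pᵀ) *ᵥ w₀ := by
    simp only [Fintype.linearCombination_apply] at hPw
    simp only [← mulVec_mulVec, mulVec_transpose, vecMul_eq_sum, hPw]
  refine ⟨w, fun w' => le_trans ?_ (hw₀ w'), ?_⟩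
  · rw [hQPw]
    gcongr
  · exact (Module.finrank_fin_fun ℝ).le.trans' hindep.ncard_le_finrank

/-- The non-robust square-root LASSO `min_w ‖Q Pᵀ w − b‖₂ + λ‖w‖₁` with `P`, `Q` of full
column rank `k < min(m,n)` admits an optimal solution with at most `k` nonzero entries. -/
theorem nonrobust_sqrt_lasso_sparse_solution
    {k m n : ℕ} (hk : 0 < k) (hm : 0 < m) (hn : 0 < n) (hkmn : k < min m n)
    (P : Matrix (Fin n) (Fin k) ℝ) (Q : Matrix (Fin m) (Fin k) ℝ)
    (hP : P.rank = k) (hQ : Q.rank = k)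
    (b : Fin m → ℝ) (lam : ℝ) (hlam : 0 ≤ lam) :
    ∃ w : Fin n → ℝ,
      (∀ w' : Fin n → ℝ,
        norm2 ((Q * Pᵀ).mulVec w - b) + lam * norm1 w ≤
          norm2 ((Q * Pᵀ).mulVec w' - b) + lam * norm1 w') ∧
      {i : Fin n | w i ≠ 0}.ncard ≤ k :=
  nonrobust_sqrt_lasso_sparse_solution_general P Q b lam hlam
end

section
/- Let A ∈ ℝ^{k×n} with k < n and let b ∈ ℝ^k lie in the range of A. Then the basis pursuit problem min_{x ∈ ℝ^n} ‖x‖₁ subject to A x = b admits an optimal solution with cardinality (number of nonzero entries) at most k. -/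
open Matrix

/-!
The ℓ1 norm dominates the sup norm, hence is coercive and attains its minimum on the closed set
`{x | A x = b}`. Take a minimizer `x` with as few nonzero entries as possible. If the columns of
`A` indexed by the support of `x` were linearly dependent, there would be `c ≠ 0` with `A c = 0`
supported inside the support of `x`. For `t` with `|t cⱼ| ≤ |xⱼ|` for all `j`, the entries of
`x ± t c` keep the signs of those of `x`, so `‖x - t c‖₁ + ‖x + t c‖₁ = 2 ‖x‖₁` and both points are
minimizers; the largest such `t` annihilates an entry of `x`, contradicting minimality of the
support. Hence the support columns are independent in `ℝ^k`, so there are at most `k` of them.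
-/

open Function Filter

theorem abs_sub_add_abs_add_of_abs_le {a b : ℝ} (h : |b| ≤ |a|) :
    |a - b| + |a + b| = 2 * |a| := by
  rcases abs_le.mp h with ⟨h₁, h₂⟩
  rcases abs_cases a with ⟨ha, -⟩ | ⟨ha, -⟩ <;> rw [ha] at h₁ h₂ ⊢
  · rw [abs_of_nonneg (by linarith), abs_of_nonneg (by linarith)]; ring
  · rw [abs_of_nonpos (by linarith), abs_of_nonpos (by linarith)]; ring

theorem exists_abs_mul_le_and_add_mul_eq_zero {ι : Type*} [Fintype ι] {x c : ι → ℝ}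
    (hc : c ≠ 0) : ∃ t : ℝ, (∀ j, |t * c j| ≤ |x j|) ∧ ∃ i, c i ≠ 0 ∧ x i + t * c i = 0 := by
  classical
  obtain ⟨i, hi, hmin⟩ := (Finset.univ.filter fun j => c j ≠ 0).exists_min_image
    (fun j => |x j| / |c j|) (by simpa [Finset.filter_nonempty_iff, funext_iff] using hc)
  replace hi : c i ≠ 0 := (Finset.mem_filter.mp hi).2
  refine ⟨-(x i / c i), fun j => ?_, i, hi, by field_simp; ring⟩
  rcases eq_or_ne (c j) 0 with hcj | hcj
  · simp [hcj]
  calc |-(x i / c i) * c j| = |x i| / |c i| * |c j| := by rw [abs_mul, abs_neg, abs_div]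
    _ ≤ |x j| / |c j| * |c j| :=
      mul_le_mul_of_nonneg_right (hmin j (by simpa using hcj)) (abs_nonneg _)
    _ = |x j| := div_mul_cancel₀ _ (abs_ne_zero.mpr hcj)

theorem Matrix.exists_mulVec_eq_zero_of_not_linearIndepOn_col {m ι R : Type*} [Fintype ι]
    [CommRing R] {A : Matrix m ι R} {s : Set ι} (h : ¬LinearIndepOn R A.col s) :
    ∃ c ≠ 0, A *ᵥ c = 0 ∧ support c ⊆ s := by
  obtain ⟨f, hfs, hf0, hf⟩ := linearDepOn_iff'.mp h
  refine ⟨f, DFunLike.coe_injective.ne hf, ?_, by simpa using (Finsupp.mem_supported R f).mp hfs⟩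
  rw [← hf0, Finsupp.linearCombination_apply, Finsupp.sum_fintype _ _ (by simp)]
  ext r
  simp [mulVec, dotProduct, mul_comm]

theorem Matrix.ncard_le_of_linearIndepOn_col {m ι R : Type*} [Fintype m] [Finite ι]
    [CommRing R] [Nontrivial R] {A : Matrix m ι R} {s : Set ι} (h : LinearIndepOn R A.col s) :
    s.ncard ≤ Fintype.card m := by
  classical
  have := Fintype.ofFinite ι
  simpa [Set.ncard_eq_toFinset_card'] using h.linearIndependent.fintype_card_le_finrank

theorem Matrix.isClosed_setOf_mulVec_eq {m ι : Type*} [Fintype ι] (A : Matrix m ι ℝ) (b : m → ℝ) :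
    IsClosed {x | A *ᵥ x = b} :=
  isClosed_eq (continuous_const.matrix_mulVec continuous_id) continuous_const

section

variable {n : ℕ}

theorem continuous_norm1 : Continuous (norm1 (n := n)) :=
  continuous_finsetSum _ fun i _ => (continuous_apply i).abs

theorem norm_le_norm1 (x : Fin n → ℝ) : ‖x‖ ≤ norm1 x :=
  (pi_norm_le_iff_of_nonneg (Finset.sum_nonneg fun i _ => abs_nonneg (x i))).mpr fun i =>
    Finset.single_le_sum (f := fun j => |x j|) (fun j _ => abs_nonneg (x j)) (Finset.mem_univ i)

theorem tendsto_norm1_cocompact_atTop : Tendsto (norm1 (n := n)) (cocompact _) atTop :=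
  tendsto_atTop_mono norm_le_norm1 tendsto_norm_cocompact_atTop

theorem IsClosed.exists_isMinOn_norm1 {S : Set (Fin n → ℝ)} (hS : IsClosed S)
    (hne : S.Nonempty) : ∃ x ∈ S, IsMinOn norm1 S x :=
  let ⟨_, hx₀⟩ := hne
  continuous_norm1.continuousOn.exists_isMinOn' hS hx₀
    ((tendsto_norm1_cocompact_atTop.mono_left inf_le_left).eventually_ge_atTop _)

theorem norm1_sub_add_norm1_add {x c : Fin n → ℝ} (h : ∀ j, |c j| ≤ |x j|) :
    norm1 (x - c) + norm1 (x + c) = 2 * norm1 x := by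
  simp only [norm1, ← Finset.sum_add_distrib, Finset.mul_sum, Pi.sub_apply, Pi.add_apply]
  exact Finset.sum_congr rfl fun j _ => abs_sub_add_abs_add_of_abs_le (h j)

theorem IsMinOn.isMinOn_norm1_add {S : Set (Fin n → ℝ)} {x c : Fin n → ℝ}
    (hx : IsMinOn norm1 S x) (hsub : x - c ∈ S)
    (h : ∀ j, |c j| ≤ |x j|) : IsMinOn norm1 S (x + c) := by
  rw [isMinOn_iff] at hx ⊢
  intro y hy
  linarith [norm1_sub_add_norm1_add h, hx _ hsub, hx y hy]

theorem IsMinOn.exists_isMinOn_norm1_support_ssubset {S : Set (Fin n → ℝ)} {x c : Fin n → ℝ}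
    (hx : IsMinOn norm1 S x) (hline : ∀ t : ℝ, x + t • c ∈ S) (hc : c ≠ 0)
    (hcx : support c ⊆ support x) :
    ∃ y ∈ S, IsMinOn norm1 S y ∧ support y ⊂ support x := by
  obtain ⟨t, hle, i, hci, hi⟩ := exists_abs_mul_le_and_add_mul_eq_zero (x := x) hc
  have hsub : x - t • c ∈ S := by simpa [sub_eq_add_neg, neg_smul] using hline (-t)
  refine ⟨x + t • c, hline t, hx.isMinOn_norm1_add hsub hle, ?_, ?_⟩
  · exact (support_add _ _).trans (Set.union_subset le_rfl
      ((support_smul_subset_right _ _).trans hcx))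
  · exact fun h => h (hcx hci) hi

theorem Matrix.exists_isMinOn_norm1_linearIndepOn_col {k : ℕ} (A : Matrix (Fin k) (Fin n) ℝ)
    {b : Fin k → ℝ} (hb : ∃ x₀, A *ᵥ x₀ = b) :
    ∃ x, A *ᵥ x = b ∧ IsMinOn norm1 {x | A *ᵥ x = b} x ∧ LinearIndepOn ℝ A.col (support x) := by
  set S := {x | A *ᵥ x = b}
  obtain ⟨x, ⟨hxS, hxmin⟩, hx⟩ := exists_minimalFor_of_wellFoundedLT
    (fun x => x ∈ S ∧ IsMinOn norm1 S x) (fun x => (support x).ncard)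
    ((A.isClosed_setOf_mulVec_eq b).exists_isMinOn_norm1 hb)
  refine ⟨x, hxS, hxmin, by_contra fun hdep => ?_⟩
  obtain ⟨c, hc, hAc, hcx⟩ := A.exists_mulVec_eq_zero_of_not_linearIndepOn_col hdep
  have hline (t : ℝ) : x + t • c ∈ S := by
    change A *ᵥ (x + t • c) = b
    rw [mulVec_add, mulVec_smul, hAc, smul_zero, add_zero, hxS]
  obtain ⟨y, hyS, hymin, hyx⟩ := hxmin.exists_isMinOn_norm1_support_ssubset hline hc hcx
  have hlt := Set.ncard_lt_ncard hyx (Set.toFinite _)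
  exact hlt.not_ge (hx ⟨hyS, hymin⟩ hlt.le)

end

theorem basis_pursuit_sparse_solution_general
    {k n : ℕ} (A : Matrix (Fin k) (Fin n) ℝ) (b : Fin k → ℝ)
    (hb : ∃ x0 : Fin n → ℝ, A.mulVec x0 = b) :
    ∃ x : Fin n → ℝ,
      A.mulVec x = b ∧
      (∀ x' : Fin n → ℝ, A.mulVec x' = b → norm1 x ≤ norm1 x') ∧
      {i : Fin n | x i ≠ 0}.ncard ≤ k := by
  obtain ⟨x, hx, hmin, hcol⟩ := A.exists_isMinOn_norm1_linearIndepOn_col hb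
  exact ⟨x, hx, fun x' hx' => isMinOn_iff.mp hmin x' hx',
    (A.ncard_le_of_linearIndepOn_col hcol).trans_eq (Fintype.card_fin k)⟩

/-- Basis pursuit `min ‖x‖₁ s.t. Ax = b`, with `A ∈ ℝ^{k×n}` wide (`k < n`) and `b` in the
range of `A`, admits an optimal solution with at most `k` nonzero entries. -/
theorem basis_pursuit_sparse_solution
    {k n : ℕ} (hkn : k < n) (A : Matrix (Fin k) (Fin n) ℝ) (b : Fin k → ℝ)
    (hb : ∃ x0 : Fin n → ℝ, A.mulVec x0 = b) :
    ∃ x : Fin n → ℝ,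
      A.mulVec x = b ∧
      (∀ x' : Fin n → ℝ, A.mulVec x' = b → norm1 x ≤ norm1 x') ∧
      {i : Fin n | x i ≠ 0}.ncard ≤ k :=
  basis_pursuit_sparse_solution_general A b hb
end

section
/- Let A ∈ ℝ^{k×n} with k < n, b ∈ ℝ^k, and suppose x ∈ ℝ^n minimizes ‖·‖₁ over the set {x : A x = b} and every entry of x is nonzero. Then there exists another minimizer x' of the same problem with ‖x'‖₁ = ‖x‖₁, A x' = b, and with strictly fewer nonzero entries than x (in particular at least one entry of x' is zero). -/
open Matrix

/-- Pointwise: if `a` and `a + d` have the same sign (weakly), then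
`|a + d| = |a| + sign(a) * d`. -/
lemma abs_add_eq_aux (a d : ℝ) (ha : a ≠ 0) (h : 0 ≤ a * (a + d)) :
    |a + d| = |a| + (a / |a|) * d := by
  rcases lt_or_gt_of_ne ha with hneg | hpos
  · have h1 : a + d ≤ 0 := by nlinarith
    rw [abs_of_nonpos h1, abs_of_neg hneg]
    field_simp; ring
  · have h1 : 0 ≤ a + d := by nlinarith
    rw [abs_of_nonneg h1, abs_of_pos hpos]
    field_simp

/-- Cardinality reduction for basis pursuit: if `k < n` and `x` minimizes `‖·‖₁` over
`{x : Ax = b}` with all entries nonzero, then there is another minimizer `x'` with the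
same ℓ1 norm, still feasible, and with strictly fewer nonzero entries (in particular at
least one entry of `x'` is zero). -/
theorem basis_pursuit_cardinality_reduction
    {k n : ℕ} (hkn : k < n) (A : Matrix (Fin k) (Fin n) ℝ) (b : Fin k → ℝ)
    (x : Fin n → ℝ) (hfeas : A.mulVec x = b)
    (hopt : ∀ z : Fin n → ℝ, A.mulVec z = b → norm1 x ≤ norm1 z)
    (hnz : ∀ i, x i ≠ 0) :
    ∃ x' : Fin n → ℝ,
      A.mulVec x' = b ∧
      norm1 x' = norm1 x ∧
      {i : Fin n | x' i ≠ 0}.ncard < {i : Fin n | x i ≠ 0}.ncard ∧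
      ∃ j : Fin n, x' j = 0 := by
  -- Step 1: a nonzero kernel vector θ₀
  obtain ⟨θ₀, hθ₀ne, hθ₀ker⟩ : ∃ θ : Fin n → ℝ, θ ≠ 0 ∧ A.mulVec θ = 0 := by
    by_contra hcon
    push_neg at hcon
    have hinj : Function.Injective A.mulVecLin := by
      rw [← LinearMap.ker_eq_bot, Submodule.eq_bot_iff]
      intro θ hθ
      by_contra hne
      exact hcon θ hne hθ
    have := LinearMap.finrank_le_finrank_of_injective hinj
    simp [Module.finrank_pi] at this
    omega
  obtain ⟨j₁, hj₁⟩ : ∃ j, θ₀ j ≠ 0 := by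
    by_contra hcon; push_neg at hcon
    exact hθ₀ne (funext fun j => hcon j)
  -- Step 2: orient θ so that x j₁ * θ j₁ < 0
  set θ : Fin n → ℝ := if x j₁ * θ₀ j₁ < 0 then θ₀ else -θ₀ with hθdef
  have hθker : A.mulVec θ = 0 := by
    rw [hθdef]; split
    · exact hθ₀ker
    · rw [Matrix.mulVec_neg, hθ₀ker, neg_zero]
  have hj₁' : x j₁ * θ j₁ < 0 := by
    rw [hθdef]; split
    · assumption
    · rename_i h
      push_neg at h
      have : x j₁ * θ₀ j₁ > 0 := by
        rcases lt_or_eq_of_le h with h' | h'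
        · exact h'
        · exact absurd h'.symm (mul_ne_zero (hnz j₁) hj₁)
      simp only [Pi.neg_apply]
      nlinarith
  -- feasibility along the line
  have hline : ∀ t : ℝ, A.mulVec (fun i => x i + t * θ i) = b := by
    intro t
    have : (fun i => x i + t * θ i) = x + t • θ := by
      funext i; simp [mul_comm]
    rw [this, Matrix.mulVec_add, Matrix.mulVec_smul, hθker, hfeas, smul_zero, add_zero]
  -- signs and directional derivative
  set s : Fin n → ℝ := fun i => x i / |x i| with hsdef
  set c : ℝ := ∑ i, s i * θ i with hcdef
  -- norm along the line while no sign flips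
  have hkey : ∀ t : ℝ, (∀ i, 0 ≤ x i * (x i + t * θ i)) →
      norm1 (fun i => x i + t * θ i) = norm1 x + t * c := by
    intro t ht
    unfold norm1
    rw [hcdef, Finset.mul_sum, ← Finset.sum_add_distrib]
    refine Finset.sum_congr rfl fun i _ => ?_
    rw [abs_add_eq_aux (x i) (t * θ i) (hnz i) (ht i), hsdef]
    ring
  -- Step 3: the first-zero step size ρ
  set S : Finset (Fin n) := Finset.univ.filter (fun j => x j * θ j < 0) with hSdef
  have hSne : S.Nonempty := ⟨j₁, by simp [hSdef, hj₁']⟩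
  set ρ : ℝ := S.inf' hSne (fun j => -(x j) / θ j) with hρdef
  have hmem_pos : ∀ j ∈ S, 0 < -(x j) / θ j := by
    intro j hj
    rw [hSdef, Finset.mem_filter] at hj
    have hxθ := hj.2
    rcases lt_or_gt_of_ne (show θ j ≠ 0 by intro h; rw [h] at hxθ; simp at hxθ) with h | h
    · apply div_pos_of_neg_of_neg _ h
      nlinarith
    · apply div_pos _ h
      nlinarith
  have hρpos : 0 < ρ := by
    rw [hρdef, Finset.lt_inf'_iff]
    exact hmem_pos
  have hθne : ∀ j ∈ S, θ j ≠ 0 := by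
    intro j hj h
    rw [hSdef, Finset.mem_filter] at hj
    rw [h] at hj; simp at hj
  -- sign condition holds for 0 ≤ t ≤ ρ
  have hcond : ∀ t : ℝ, 0 ≤ t → t ≤ ρ → ∀ i, 0 ≤ x i * (x i + t * θ i) := by
    intro t ht0 htρ i
    rcases le_or_gt 0 (x i * θ i) with h | h
    · nlinarith [mul_nonneg ht0 h, sq_nonneg (x i)]
    · have hiS : i ∈ S := by simp [hSdef, h]
      have hθi : θ i ≠ 0 := hθne i hiS
      have hle : t ≤ -(x i) / θ i := le_trans htρ (Finset.inf'_le _ hiS)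
      rcases lt_or_gt_of_ne hθi with hθneg | hθpos
      · have : -(x i) / θ i * θ i = -(x i) := div_mul_cancel₀ _ hθi
        have htθ : t * θ i ≥ -(x i) := by nlinarith [mul_le_mul_of_nonpos_right hle (le_of_lt hθneg)]
        nlinarith
      · have : -(x i) / θ i * θ i = -(x i) := div_mul_cancel₀ _ hθi
        have htθ : t * θ i ≤ -(x i) := by nlinarith [mul_le_mul_of_nonneg_right hle (le_of_lt hθpos)]
        nlinarith
  -- Step 4: c = 0 by optimality
  set T : Finset (Fin n) := Finset.univ.filter (fun j => θ j ≠ 0) with hTdef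
  have hTne : T.Nonempty := ⟨j₁, by
    simp only [hTdef, Finset.mem_filter, Finset.mem_univ, true_and, hθdef]
    split
    · exact hj₁
    · simpa using hj₁⟩
  set ε : ℝ := T.inf' hTne (fun j => |x j| / |θ j|) with hεdef
  have hεpos : 0 < ε := by
    rw [hεdef, Finset.lt_inf'_iff]
    intro j hj
    rw [hTdef, Finset.mem_filter] at hj
    exact div_pos (abs_pos.mpr (hnz j)) (abs_pos.mpr hj.2)
  have hεcond : ∀ t : ℝ, |t| ≤ ε → ∀ i, 0 ≤ x i * (x i + t * θ i) := by
    intro t ht i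
    rcases eq_or_ne (θ i) 0 with h | h
    · rw [h]; nlinarith [sq_nonneg (x i)]
    · have hiT : i ∈ T := by simp [hTdef, h]
      have hle : |x i| / |θ i| ≥ |t| := le_trans ht (Finset.inf'_le _ hiT)
      have hθabs : 0 < |θ i| := abs_pos.mpr h
      have h2 : |t| * |θ i| ≤ |x i| := by
        rw [ge_iff_le, le_div_iff₀ hθabs] at hle; exact hle
      have h3 : |t * θ i| ≤ |x i| := by rw [abs_mul]; exact h2
      have h4 : x i * (t * θ i) ≥ -(|x i| * |x i|) := by
        nlinarith [neg_abs_le (x i * (t * θ i)), abs_mul (x i) (t * θ i),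
          mul_le_mul_of_nonneg_left h3 (abs_nonneg (x i))]
      nlinarith [abs_mul_abs_self (x i)]
  have hc0 : c = 0 := by
    have h1 := hkey ε (hεcond ε (by rw [abs_of_pos hεpos]))
    have h2 := hkey (-ε) (hεcond (-ε) (by rw [abs_neg, abs_of_pos hεpos]))
    have o1 := hopt _ (hline ε)
    have o2 := hopt _ (hline (-ε))
    rw [h1] at o1
    rw [h2] at o2
    nlinarith
  -- Step 5: the new point
  set x' : Fin n → ℝ := fun i => x i + ρ * θ i with hx'def
  obtain ⟨j₀, hj₀S, hj₀eq⟩ : ∃ j ∈ S, ρ = -(x j) / θ j := Finset.exists_mem_eq_inf' hSne _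
  have hx'j₀ : x' j₀ = 0 := by
    rw [hx'def]
    have hθj₀ : θ j₀ ≠ 0 := hθne j₀ hj₀S
    simp only
    rw [hj₀eq, div_mul_cancel₀ _ hθj₀]
    ring
  have hnorm : norm1 x' = norm1 x := by
    rw [hx'def, hkey ρ (hcond ρ (le_of_lt hρpos) le_rfl), hc0, mul_zero, add_zero]
  refine ⟨x', hline ρ, hnorm, ?_, j₀, hx'j₀⟩
  apply Set.ncard_lt_ncard
  · constructor
    · intro i _
      exact hnz i
    · intro hsub
      have := hsub (hnz j₀)
      rw [Set.mem_setOf_eq] at this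
      exact this hx'j₀
  · exact Set.toFinite _
end

section
/- Let X̂ ∈ ℝ^{n×m}, y ∈ ℝ^m, ε ≥ 0 and λ ≥ 0. Then the robust square-root LASSO optimal value min_{w ∈ ℝ^n} max_{Δ ∈ ℝ^{n×m}, ‖Δ‖ ≤ ε} ‖(X̂ + Δ)ᵀ w − y‖₂ + λ‖w‖₁ equals the optimal value of the regularized problem min_{w ∈ ℝ^n} ‖X̂ᵀ w − y‖₂ + ε‖w‖₂ + λ‖w‖₁, i.e. the infima over w of the two objectives coincide. -/
/-!
For a fixed `w` the inner maximum is computed in closed form. Since `‖Δᵀ‖ = ‖Δ‖`, the triangle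
inequality bounds `‖(X̂ + Δ)ᵀw − y‖` by `‖X̂ᵀw − y‖ + ε‖w‖`, and the rank-one perturbation
`Δᵀ = (ε / ‖w‖) v wᵀ`, with `v` a unit vector pointing along the residual `X̂ᵀw − y`, attains
this bound. Hence the two objectives agree pointwise as soon as `m > 0`. When `m = 0` there is no
unit vector in `ℝ^m` and the objectives differ, but both are minimised at `w = 0` with value `0`.
-/

open Matrix

/-- Spectral norm (ℓ2→ℓ2 operator norm, i.e. largest singular value) of a matrix
`Δ ∈ ℝ^{n×m}`, acting on vectors `x ∈ ℝ^m`. -/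
noncomputable def specNorm {n m : ℕ} (Δ : Matrix (Fin n) (Fin m) ℝ) : ℝ :=
  sSup {t : ℝ | ∃ x : Fin m → ℝ, norm2 x ≤ 1 ∧ t = norm2 (Δ.mulVec x)}

theorem ciInf_eq_apply_of_forall_le {α ι : Type*} [ConditionallyCompleteLattice α] {f : ι → α}
    (i₀ : ι) (h : ∀ i, f i₀ ≤ f i) : ⨅ i, f i = f i₀ :=
  have : Nonempty ι := ⟨i₀⟩
  (IsLeast.isGLB ⟨Set.mem_range_self i₀, Set.forall_mem_range.2 h⟩).ciInf_eq

lemma exists_norm_eq_one_sameRay {F : Type*} [NormedAddCommGroup F] [NormedSpace ℝ F]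
    [Nontrivial F] (r : F) :
    ∃ v : F, ‖v‖ = 1 ∧ SameRay ℝ r v := by
  rcases eq_or_ne r 0 with rfl | hr
  · obtain ⟨v, hv⟩ := exists_norm_eq F zero_le_one
    exact ⟨v, hv, .zero_left v⟩
  · exact ⟨‖r‖⁻¹ • r, norm_smul_inv_norm hr,
      SameRay.sameRay_pos_smul_right r (inv_pos.2 (norm_pos_iff.2 hr))⟩

section RankOne

variable {E F : Type*} [NormedAddCommGroup E] [InnerProductSpace ℝ E]
  [NormedAddCommGroup F] [InnerProductSpace ℝ F]

lemma exists_opNorm_le_norm_add_apply_eq [Nontrivial F] (r : F) (w : E) {ε : ℝ} (hε : 0 ≤ ε) :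
    ∃ A : E →L[ℝ] F, ‖A‖ ≤ ε ∧ ‖r + A w‖ = ‖r‖ + ε * ‖w‖ := by
  rcases eq_or_ne w 0 with rfl | hw
  · exact ⟨0, by simpa using hε, by simp⟩
  obtain ⟨v, hv, hrv⟩ := exists_norm_eq_one_sameRay r
  have hw' : 0 < ‖w‖ := norm_pos_iff.2 hw
  refine ⟨(ε / ‖w‖) • InnerProductSpace.rankOne ℝ v w, ?_, ?_⟩
  · rw [norm_smul, InnerProductSpace.norm_rankOne, hv, one_mul,
      Real.norm_of_nonneg (by positivity), div_mul_cancel₀ ε hw'.ne']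
  · have hAw : ((ε / ‖w‖) • InnerProductSpace.rankOne ℝ v w) w = (ε * ‖w‖) • v := by
      rw [_root_.smul_apply, InnerProductSpace.rankOne_apply, smul_smul, real_inner_self_eq_norm_sq]
      field_simp
    rw [hAw, (hrv.nonneg_smul_right (by positivity)).norm_add, norm_smul, hv, mul_one,
      Real.norm_of_nonneg (by positivity)]

end RankOne

lemma norm2_nonneg {k : ℕ} (x : Fin k → ℝ) : 0 ≤ norm2 x := Real.sqrt_nonneg _

lemma norm2_of_fin_zero (x : Fin 0 → ℝ) : norm2 x = 0 := by simp [norm2]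

lemma norm1_nonneg {k : ℕ} (x : Fin k → ℝ) : 0 ≤ norm1 x :=
  Finset.sum_nonneg fun i _ => abs_nonneg (x i)

lemma transpose_add_mulVec_sub {n m : ℕ} (Xh Δ : Matrix (Fin n) (Fin m) ℝ) (w : Fin n → ℝ)
    (y : Fin m → ℝ) : (Xh + Δ)ᵀ *ᵥ w - y = (Xhᵀ *ᵥ w - y) + Δᵀ *ᵥ w := by
  rw [transpose_add, add_mulVec]
  abel

section L2OpNorm

open scoped Matrix.Norms.L2Operator

lemma norm2_eq_norm {k : ℕ} (x : Fin k → ℝ) : norm2 x = ‖WithLp.toLp 2 x‖ := by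
  simp [norm2, EuclideanSpace.norm_eq, sq_abs]

lemma specNorm_eq_l2_opNorm {n m : ℕ} (Δ : Matrix (Fin n) (Fin m) ℝ) : specNorm Δ = ‖Δ‖ := by
  rw [l2_opNorm_def, ← ContinuousLinearMap.sSup_unitClosedBall_eq_norm, specNorm]
  congr 1
  ext t
  constructor
  · rintro ⟨x, hx, rfl⟩
    exact ⟨WithLp.toLp 2 x, by simpa [norm2_eq_norm] using hx, by simp [norm2_eq_norm]⟩
  · rintro ⟨x, hx, rfl⟩
    exact ⟨x.ofLp, by simpa [norm2_eq_norm] using hx, by simp [norm2_eq_norm]; rfl⟩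

lemma l2_opNorm_transpose {m n : Type*} [Fintype m] [Fintype n] [DecidableEq m] [DecidableEq n]
    (Δ : Matrix m n ℝ) : ‖Δᵀ‖ = ‖Δ‖ := by
  rw [← conjTranspose_eq_transpose_of_trivial, l2_opNorm_conjTranspose]

lemma isGreatest_robust_residual {n m : ℕ} (hm : 0 < m) (Xh : Matrix (Fin n) (Fin m) ℝ)
    (y : Fin m → ℝ) (w : Fin n → ℝ) {ε : ℝ} (hε : 0 ≤ ε) :
    IsGreatest {r : ℝ | ∃ Δ : Matrix (Fin n) (Fin m) ℝ,
        specNorm Δ ≤ ε ∧ r = norm2 ((Xh + Δ)ᵀ *ᵥ w - y)}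
      (norm2 (Xhᵀ *ᵥ w - y) + ε * norm2 w) := by
  simp only [transpose_add_mulVec_sub, norm2_eq_norm, specNorm_eq_l2_opNorm, WithLp.toLp_add]
  constructor
  · have : NeZero m := ⟨hm.ne'⟩
    obtain ⟨A, hA, hAeq⟩ :=
      exists_opNorm_le_norm_add_apply_eq (WithLp.toLp 2 (Xhᵀ *ᵥ w - y)) (WithLp.toLp 2 w) hε
    obtain ⟨M, rfl⟩ :=
      ((toEuclideanLin (𝕜 := ℝ) (m := Fin m) (n := Fin n)).trans
        LinearMap.toContinuousLinearMap).surjective A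
    refine ⟨Mᵀ, ?_, ?_⟩
    · rwa [l2_opNorm_transpose, l2_opNorm_def]
    · rw [transpose_transpose, ← hAeq]
      rfl
  · rintro r ⟨Δ, hΔ, rfl⟩
    calc _ ≤ ‖WithLp.toLp 2 (Xhᵀ *ᵥ w - y)‖ + ‖Δᵀ‖ * ‖WithLp.toLp 2 w‖ := by
          grw [norm_add_le]
          gcongr
          exact l2_opNorm_mulVec Δᵀ (WithLp.toLp 2 w)
      _ ≤ _ := by
          rw [l2_opNorm_transpose]
          gcongr

end L2OpNorm

/-- The robust square-root LASSO `min_w max_{‖Δ‖ ≤ ε} ‖(X̂+Δ)ᵀw − y‖₂ + λ‖w‖₁` has the same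
optimal value as the regularized problem `min_w ‖X̂ᵀw − y‖₂ + ε‖w‖₂ + λ‖w‖₁`. -/
theorem robust_sqrt_lasso_eq_regularized
    {n m : ℕ} (Xh : Matrix (Fin n) (Fin m) ℝ) (y : Fin m → ℝ)
    (ε lam : ℝ) (hε : 0 ≤ ε) (hlam : 0 ≤ lam) :
    (⨅ w : Fin n → ℝ,
        (sSup {r : ℝ | ∃ Δ : Matrix (Fin n) (Fin m) ℝ,
            specNorm Δ ≤ ε ∧ r = norm2 ((Xh + Δ)ᵀ.mulVec w - y)} + lam * norm1 w)) =
      ⨅ w : Fin n → ℝ, (norm2 (Xhᵀ.mulVec w - y) + ε * norm2 w + lam * norm1 w) := by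
  rcases Nat.eq_zero_or_pos m with rfl | hm
  · have hsSup : ∀ w : Fin n → ℝ, sSup {r : ℝ | ∃ Δ : Matrix (Fin n) (Fin 0) ℝ,
        specNorm Δ ≤ ε ∧ r = norm2 ((Xh + Δ)ᵀ.mulVec w - y)} = 0 := fun w =>
      le_antisymm (Real.sSup_nonpos (by rintro _ ⟨Δ, -, rfl⟩; rw [norm2_of_fin_zero]))
        (Real.sSup_nonneg (by rintro _ ⟨Δ, -, rfl⟩; rw [norm2_of_fin_zero]))
    simp only [hsSup]
    simp only [norm2_of_fin_zero, zero_add]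
    rw [ciInf_eq_apply_of_forall_le 0, ciInf_eq_apply_of_forall_le 0]
    · simp [norm2, norm1]
    · intro w
      simpa [norm2, norm1] using
        add_nonneg (mul_nonneg hε (norm2_nonneg w)) (mul_nonneg hlam (norm1_nonneg w))
    · intro w
      simpa [norm1] using mul_nonneg hlam (norm1_nonneg w)
  · exact iInf_congr fun w => by rw [(isGreatest_robust_residual hm Xh y w hε).csSup_eq]
end

section
/- Let Q ∈ ℝ^{m×k} have full column rank, y ∈ ℝ^m, K := QᵀQ, c := K^{-1/2} Qᵀ y, and s := √(yᵀy − cᵀc). Let u ∈ ℝ^k satisfy uᵀ K^{-1} u < 1. Then the infimum over z ∈ ℝ^k of ‖Q z − y‖₂ + uᵀ z equals uᵀ K^{-1/2} c + s·√(1 − uᵀ K^{-1} u). -/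
/-!
Write `R` for the symmetric square root of `K = QᵀQ`. Since `RᵀR = QᵀQ` and `Rᵀc = Qᵀy`,
the residual splits as `‖Qz - y‖² = ‖Rz - c‖² + s²`, and `uᵀz = vᵀ(Rz)` with `v = R⁻¹u`, so
`‖v‖² = uᵀK⁻¹u`. After the substitution `w = Rz - c` the objective is `√(‖w‖² + s²) + vᵀw + vᵀc`.
By Cauchy–Schwarz, once for `vᵀw` and once in the plane for the unit vector
`(‖v‖, √(1 - ‖v‖²))`, it is at least `vᵀc + s√(1 - ‖v‖²)`; the bound is attained at
`w = -(s / √(1 - ‖v‖²)) v`.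
-/

open Matrix

/-- The positive semidefinite square root of a positive semidefinite matrix
(the definition `Matrix.PosSemidef.sqrt` of the older Mathlib, since removed). -/
noncomputable def Matrix.PosSemidef.sqrt {n : Type*} [Fintype n] [DecidableEq n]
    {A : Matrix n n ℝ} (hA : A.PosSemidef) : Matrix n n ℝ :=
  hA.1.eigenvectorUnitary.1 * diagonal ((↑) ∘ (√·) ∘ hA.1.eigenvalues) *
  (star hA.1.eigenvectorUnitary : Matrix n n ℝ)

open Set

namespace Matrix

variable {m n : Type*} [Fintype m] [Fintype n]

theorem PosSemidef.sqrt_mul_self [DecidableEq n] {A : Matrix n n ℝ} (hA : A.PosSemidef) :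
    hA.sqrt * hA.sqrt = A := by
  have hU : (star hA.1.eigenvectorUnitary : Matrix n n ℝ) * hA.1.eigenvectorUnitary.1 = 1 :=
    Unitary.coe_star_mul_self _
  have hD : diagonal ((↑) ∘ (√·) ∘ hA.1.eigenvalues) * diagonal ((↑) ∘ (√·) ∘ hA.1.eigenvalues)
      = (diagonal (RCLike.ofReal ∘ hA.1.eigenvalues) : Matrix n n ℝ) := by
    rw [diagonal_mul_diagonal]
    congr 1
    funext i
    simp [Real.mul_self_sqrt (hA.eigenvalues_nonneg i)]
  conv_rhs => rw [hA.1.spectral_theorem, Unitary.conjStarAlgAut_apply, ← hD]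
  simp only [PosSemidef.sqrt, Matrix.mul_assoc]
  rw [← Matrix.mul_assoc _ _ (diagonal _ * _), hU, Matrix.one_mul]

theorem PosSemidef.transpose_sqrt [DecidableEq n] {A : Matrix n n ℝ} (hA : A.PosSemidef) :
    hA.sqrtᵀ = hA.sqrt := by
  simp [PosSemidef.sqrt, transpose_mul, Matrix.mul_assoc, star_eq_conjTranspose]

theorem PosDef.isUnit_det_sqrt [DecidableEq n] {A : Matrix n n ℝ} (hA : A.PosDef) :
    IsUnit hA.posSemidef.sqrt.det := by
  have hsq : hA.posSemidef.sqrt.det * hA.posSemidef.sqrt.det = A.det := by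
    rw [← det_mul, hA.posSemidef.sqrt_mul_self]
  exact isUnit_of_mul_isUnit_left (hsq ▸ hA.det_pos.ne'.isUnit)

theorem mulVec_nonsing_inv_mulVec [DecidableEq n] {α : Type*} [CommRing α] {A : Matrix n n α}
    (hA : IsUnit A.det) (x : n → α) : A *ᵥ A⁻¹ *ᵥ x = x := by
  rw [mulVec_mulVec, mul_nonsing_inv _ hA, one_mulVec]

theorem dotProduct_eq_nonsing_inv_mulVec_dotProduct_mulVec [DecidableEq n] {α : Type*}
    [CommRing α] {A : Matrix n n α} (hAt : Aᵀ = A) (hA : IsUnit A.det) (u z : n → α) :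
    u ⬝ᵥ z = A⁻¹ *ᵥ u ⬝ᵥ A *ᵥ z := by
  rw [dotProduct_mulVec, ← mulVec_transpose, hAt, mulVec_nonsing_inv_mulVec hA]

theorem dotProduct_self_mulVec_sub {α : Type*} [CommRing α] (A : Matrix m n α) (z : n → α)
    (x : m → α) :
    (A *ᵥ z - x) ⬝ᵥ (A *ᵥ z - x) = z ⬝ᵥ (Aᵀ * A) *ᵥ z - 2 * (z ⬝ᵥ Aᵀ *ᵥ x) + x ⬝ᵥ x := by
  have hquad : A *ᵥ z ⬝ᵥ A *ᵥ z = z ⬝ᵥ (Aᵀ * A) *ᵥ z := by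
    rw [← mulVec_mulVec, dotProduct_mulVec z, vecMul_transpose]
  have hcross : A *ᵥ z ⬝ᵥ x = z ⬝ᵥ Aᵀ *ᵥ x := by
    rw [dotProduct_mulVec, vecMul_transpose]
  simp only [sub_dotProduct, dotProduct_sub, hquad, hcross, dotProduct_comm x]
  ring

theorem dotProduct_self_mulVec_sub_eq_of_gram_eq {p α : Type*} [Fintype p] [CommRing α]
    {A : Matrix m n α} {B : Matrix p n α} {a : m → α} {b : p → α} (hAB : Aᵀ * A = Bᵀ * B)
    (hab : Aᵀ *ᵥ a = Bᵀ *ᵥ b) (z : n → α) :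
    (A *ᵥ z - a) ⬝ᵥ (A *ᵥ z - a) = (B *ᵥ z - b) ⬝ᵥ (B *ᵥ z - b) + (a ⬝ᵥ a - b ⬝ᵥ b) := by
  rw [dotProduct_self_mulVec_sub, dotProduct_self_mulVec_sub, hAB, hab]
  ring

end Matrix

theorem norm2_eq_sqrt_dotProduct_self {n : ℕ} (x : Fin n → ℝ) : norm2 x = √(x ⬝ᵥ x) := by
  simp [norm2, dotProduct, sq]

section SqrtAddDotProduct

variable {n : Type*} [Fintype n]

theorem mul_sqrt_one_sub_dotProduct_self_le {v : n → ℝ} (hv : v ⬝ᵥ v ≤ 1) (s : ℝ)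
    (x : n → ℝ) : s * √(1 - v ⬝ᵥ v) ≤ √(x ⬝ᵥ x + s ^ 2) + v ⬝ᵥ x := by
  have hcs : -(v ⬝ᵥ x) ≤ √(v ⬝ᵥ v) * √(x ⬝ᵥ x) := by
    simpa [dotProduct, sq] using Real.sum_mul_le_sqrt_mul_sqrt Finset.univ (-v) x
  have hplane : √(v ⬝ᵥ v) * √(x ⬝ᵥ x) + √(1 - v ⬝ᵥ v) * s ≤ √(x ⬝ᵥ x + s ^ 2) := by
    have hv0 : 0 ≤ v ⬝ᵥ v := dotProduct_star_self_nonneg v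
    have hx0 : 0 ≤ x ⬝ᵥ x := dotProduct_star_self_nonneg x
    apply Real.le_sqrt_of_sq_le
    nlinarith [Real.sq_sqrt hv0, Real.sq_sqrt hx0, Real.sq_sqrt (sub_nonneg.2 hv),
      sq_nonneg (√(v ⬝ᵥ v) * s - √(1 - v ⬝ᵥ v) * √(x ⬝ᵥ x))]
  linarith

theorem isLeast_range_sqrt_add_dotProduct {v : n → ℝ} (hv : v ⬝ᵥ v < 1) {s : ℝ} (hs : 0 ≤ s)
    (c : n → ℝ) :
    IsLeast (range fun w ↦ √((w - c) ⬝ᵥ (w - c) + s ^ 2) + v ⬝ᵥ w)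
      (v ⬝ᵥ c + s * √(1 - v ⬝ᵥ v)) := by
  set b := √(1 - v ⬝ᵥ v)
  have hb : 0 < b := Real.sqrt_pos.2 (sub_pos.2 hv)
  have hvb : v ⬝ᵥ v = 1 - b ^ 2 := by rw [Real.sq_sqrt (sub_pos.2 hv).le]; ring
  refine ⟨⟨c - (s / b) • v, ?_⟩, ?_⟩
  · have hnorm : (s / b) • v ⬝ᵥ (s / b) • v + s ^ 2 = (s / b) ^ 2 := by
      simp only [smul_dotProduct, dotProduct_smul, smul_eq_mul, hvb]
      field_simp
      ring
    beta_reduce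
    rw [sub_sub_cancel_left, neg_dotProduct, dotProduct_neg, neg_neg, hnorm,
      Real.sqrt_sq (div_nonneg hs hb.le), dotProduct_sub, dotProduct_smul, smul_eq_mul, hvb]
    field_simp
    ring
  · rintro _ ⟨w, rfl⟩
    have := mul_sqrt_one_sub_dotProduct_self_le hv.le s (w - c)
    simp only [dotProduct_sub] at this ⊢
    linarith

end SqrtAddDotProduct

theorem dual_function_f1_closed_form_general
    {m k : ℕ} (Q : Matrix (Fin m) (Fin k) ℝ)
    (hK : (Qᵀ * Q).PosDef) (y : Fin m → ℝ) (u : Fin k → ℝ)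
    (hu : u ⬝ᵥ (Qᵀ * Q)⁻¹.mulVec u < 1) :
    ∀ c : Fin k → ℝ, c = (Matrix.PosSemidef.sqrt hK.posSemidef)⁻¹.mulVec (Qᵀ.mulVec y) →
    ∀ s : ℝ, s = Real.sqrt (y ⬝ᵥ y - c ⬝ᵥ c) →
      sInf {t : ℝ | ∃ z : Fin k → ℝ, t = norm2 (Q.mulVec z - y) + u ⬝ᵥ z} =
        u ⬝ᵥ (Matrix.PosSemidef.sqrt hK.posSemidef)⁻¹.mulVec c
          + s * Real.sqrt (1 - u ⬝ᵥ (Qᵀ * Q)⁻¹.mulVec u) := by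
  intro c hc s hs
  set R := hK.posSemidef.sqrt
  have hRt : Rᵀ = R := hK.posSemidef.transpose_sqrt
  have hR : IsUnit R.det := hK.isUnit_det_sqrt
  have hres : ∀ z, (Q *ᵥ z - y) ⬝ᵥ (Q *ᵥ z - y) =
      (R *ᵥ z - c) ⬝ᵥ (R *ᵥ z - c) + (y ⬝ᵥ y - c ⬝ᵥ c) :=
    dotProduct_self_mulVec_sub_eq_of_gram_eq (by rw [hRt, hK.posSemidef.sqrt_mul_self])
      (by rw [hRt, hc, mulVec_nonsing_inv_mulVec hR])
  have hs2 : s ^ 2 = y ⬝ᵥ y - c ⬝ᵥ c := by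
    have hres_c := hres (R⁻¹ *ᵥ c)
    rw [mulVec_nonsing_inv_mulVec hR, sub_self, zero_dotProduct, zero_add] at hres_c
    rw [hs, Real.sq_sqrt (hres_c ▸ dotProduct_star_self_nonneg _)]
  set v := R⁻¹ *ᵥ u
  have hu_eq : ∀ z, u ⬝ᵥ z = v ⬝ᵥ R *ᵥ z :=
    dotProduct_eq_nonsing_inv_mulVec_dotProduct_mulVec hRt hR u
  have hset : {t : ℝ | ∃ z : Fin k → ℝ, t = norm2 (Q *ᵥ z - y) + u ⬝ᵥ z} =
      range fun w ↦ √((w - c) ⬝ᵥ (w - c) + s ^ 2) + v ⬝ᵥ w := by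
    ext t
    simp only [mem_ofPred_eq, mem_range, norm2_eq_sqrt_dotProduct_self, hres, hu_eq, ← hs2]
    exact ⟨fun ⟨z, ht⟩ ↦ ⟨R *ᵥ z, ht.symm⟩,
      fun ⟨w, ht⟩ ↦ ⟨R⁻¹ *ᵥ w, by rw [mulVec_nonsing_inv_mulVec hR, ht]⟩⟩
  have hvv : u ⬝ᵥ (Qᵀ * Q)⁻¹ *ᵥ u = v ⬝ᵥ v := by
    rw [← hK.posSemidef.sqrt_mul_self, Matrix.mul_inv_rev, ← mulVec_mulVec, hu_eq,
      mulVec_nonsing_inv_mulVec hR]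
  rw [hset, hu_eq, mulVec_nonsing_inv_mulVec hR, hvv]
  exact (isLeast_range_sqrt_add_dotProduct (hvv ▸ hu) (hs ▸ Real.sqrt_nonneg _) c).csInf_eq

/-- Closed form of the dual function `f₁(u) = min_z ‖Qz − y‖₂ + uᵀz`: with `K := QᵀQ`
positive definite, `c := K^{-1/2}Qᵀy`, `s := √(yᵀy − cᵀc)`, and `uᵀK⁻¹u < 1`, one has
`inf_z ‖Qz − y‖₂ + uᵀz = uᵀK^{-1/2}c + s √(1 − uᵀK⁻¹u)`. -/
theorem dual_function_f1_closed_form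
    {m k : ℕ} (Q : Matrix (Fin m) (Fin k) ℝ) (hQ : Q.rank = k)
    (hK : (Qᵀ * Q).PosDef) (y : Fin m → ℝ) (u : Fin k → ℝ)
    (hu : u ⬝ᵥ (Qᵀ * Q)⁻¹.mulVec u < 1) :
    ∀ c : Fin k → ℝ, c = (Matrix.PosSemidef.sqrt hK.posSemidef)⁻¹.mulVec (Qᵀ.mulVec y) →
    ∀ s : ℝ, s = Real.sqrt (y ⬝ᵥ y - c ⬝ᵥ c) →
      sInf {t : ℝ | ∃ z : Fin k → ℝ, t = norm2 (Q.mulVec z - y) + u ⬝ᵥ z} =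
        u ⬝ᵥ (Matrix.PosSemidef.sqrt hK.posSemidef)⁻¹.mulVec c
          + s * Real.sqrt (1 - u ⬝ᵥ (Qᵀ * Q)⁻¹.mulVec u) :=
  dual_function_f1_closed_form_general Q hK y u hu
end
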